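/- arXiv:1301.6301 — 3 statements merged into one kernel-verified Lean document; each statement's English description precedes it below -/
import Mathlib

section
/- Let ε ∈ [0,1], let x_t, y_t be the density-evolution sequences of a protograph, let d be the maximum degree of a check node with d ≥ 2, and let x̄_t = max_{e ∈ E} x_t(e). Then for every iteration t ≥ 0 and every edge e ∈ E, x_{t+1}(e) ≤ ε · ((d − 1) · x̄_t)^{deg(vmap e) − 1}, where deg(vmap e) is the degree of the variable node incident to e. -/
open Finset

lemma aux_prod_one_sub_mem {ι : Type*} (s : Finset ι) (f : ι → ℝ)
    (h0 : ∀ i ∈ s, 0 ≤ f i) (h1 : ∀ i ∈ s, f i ≤ 1) :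
    0 ≤ ∏ i ∈ s, (1 - f i) ∧ ∏ i ∈ s, (1 - f i) ≤ 1 := by
  constructor
  · exact Finset.prod_nonneg fun i hi => by linarith [h1 i hi]
  · exact Finset.prod_le_one (fun i hi => by linarith [h1 i hi]) (fun i hi => by linarith [h0 i hi])

lemma aux_one_sub_prod_le_sum {ι : Type*} [DecidableEq ι] (s : Finset ι) (f : ι → ℝ)
    (h0 : ∀ i ∈ s, 0 ≤ f i) (h1 : ∀ i ∈ s, f i ≤ 1) :
    1 - ∏ i ∈ s, (1 - f i) ≤ ∑ i ∈ s, f i := by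
  induction s using Finset.cons_induction with
  | empty => simp
  | cons a s ha ih =>
    rw [Finset.prod_cons, Finset.sum_cons]
    have h0' : ∀ i ∈ s, 0 ≤ f i := fun i hi => h0 i (Finset.mem_cons_of_mem hi)
    have h1' : ∀ i ∈ s, f i ≤ 1 := fun i hi => h1 i (Finset.mem_cons_of_mem hi)
    have ih' := ih h0' h1'
    obtain ⟨hp0, hp1⟩ := aux_prod_one_sub_mem s f h0' h1'
    have hfa0 := h0 a (Finset.mem_cons_self a s)
    nlinarith

/-- Let `ε ∈ [0,1]`, let `x`, `y` be the density-evolution sequences of a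
protograph, let `d ≥ 2` be the maximum degree of a check node, and let
`x̄ t = max_{e ∈ E} x t e`.  Then for every iteration `t ≥ 0` and every edge `e`,
`x (t+1) e ≤ ε * ((d - 1) * x̄ t) ^ (deg (vmap e) - 1)`, where `deg (vmap e)` is the
degree of the variable node incident to `e`. -/
theorem protograph_density_evolution_variable_bound
    {E V C : Type*} [Fintype E] [DecidableEq E] [Nonempty E]
    [DecidableEq V] [Fintype C] [DecidableEq C]
    (vmap : E → V) (cmap : E → C)
    (ε : ℝ) (hε : ε ∈ Set.Icc (0 : ℝ) 1)
    (x y : ℕ → E → ℝ)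
    (hx0 : ∀ e : E, x 0 e = ε)
    (hy : ∀ (t : ℕ) (e : E), y (t + 1) e =
      1 - ∏ e' ∈ univ.filter (fun e' => e' ≠ e ∧ cmap e' = cmap e), (1 - x t e'))
    (hx : ∀ (t : ℕ) (e : E), x (t + 1) e =
      ε * ∏ e' ∈ univ.filter (fun e' => e' ≠ e ∧ vmap e' = vmap e), y (t + 1) e')
    (d : ℕ)
    (hd : d = univ.sup (fun c : C => (univ.filter (fun e : E => cmap e = c)).card))
    (hd2 : 2 ≤ d)
    (xbar : ℕ → ℝ)
    (hxbar : ∀ t : ℕ, xbar t = univ.sup' univ_nonempty (x t)) :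
    ∀ (t : ℕ) (e : E), x (t + 1) e ≤
      ε * (((d : ℝ) - 1) * xbar t) ^
        ((univ.filter (fun e' : E => vmap e' = vmap e)).card - 1) := by
  obtain ⟨hε0, hε1⟩ := hε
  -- x t e ∈ [0,1] for all t
  have hx01 : ∀ t e, 0 ≤ x t e ∧ x t e ≤ 1 := by
    intro t
    induction t with
    | zero => intro e; rw [hx0]; exact ⟨hε0, hε1⟩
    | succ t ih =>
      intro e
      have hy01 : ∀ e', 0 ≤ y (t + 1) e' ∧ y (t + 1) e' ≤ 1 := by
        intro e'
        rw [hy]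
        obtain ⟨hp0, hp1⟩ := aux_prod_one_sub_mem _ (x t)
          (fun i _ => (ih i).1) (fun i _ => (ih i).2)
        constructor <;> linarith
      rw [hx]
      constructor
      · exact mul_nonneg hε0 (Finset.prod_nonneg fun i _ => (hy01 i).1)
      · calc ε * ∏ e' ∈ univ.filter (fun e' => e' ≠ e ∧ vmap e' = vmap e), y (t + 1) e'
            ≤ 1 * 1 := by
              apply mul_le_mul hε1 (Finset.prod_le_one (fun i _ => (hy01 i).1)
                (fun i _ => (hy01 i).2)) (Finset.prod_nonneg fun i _ => (hy01 i).1) zero_le_one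
          _ = 1 := one_mul 1
  intro t e
  -- xbar nonneg and x ≤ xbar
  have hxle : ∀ e', x t e' ≤ xbar t := by
    intro e'; rw [hxbar]; exact Finset.le_sup' _ (mem_univ e')
  have hxbar0 : 0 ≤ xbar t := le_trans (hx01 t (Classical.arbitrary E)).1 (hxle _)
  -- y bound
  have hybound : ∀ e', y (t + 1) e' ≤ ((d : ℝ) - 1) * xbar t := by
    intro e'
    rw [hy]
    set s := univ.filter (fun e'' => e'' ≠ e' ∧ cmap e'' = cmap e') with hs
    have h1 : 1 - ∏ i ∈ s, (1 - x t i) ≤ ∑ i ∈ s, x t i :=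
      aux_one_sub_prod_le_sum s (x t) (fun i _ => (hx01 t i).1) (fun i _ => (hx01 t i).2)
    have h2 : ∑ i ∈ s, x t i ≤ s.card • xbar t :=
      Finset.sum_le_card_nsmul s (x t) (xbar t) (fun i _ => hxle i)
    have hcard : (s.card : ℝ) ≤ (d : ℝ) - 1 := by
      have hseq : s = (univ.filter (fun e'' : E => cmap e'' = cmap e')).erase e' := by
        ext a; simp [hs, Finset.mem_erase, and_comm]
      have hmem : e' ∈ univ.filter (fun e'' : E => cmap e'' = cmap e') := by simp
      have hcard1 : s.card = (univ.filter (fun e'' : E => cmap e'' = cmap e')).card - 1 := by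
        rw [hseq, Finset.card_erase_of_mem hmem]
      have hle : (univ.filter (fun e'' : E => cmap e'' = cmap e')).card ≤ d := by
        rw [hd]; exact Finset.le_sup (f := fun c : C => (univ.filter (fun e : E => cmap e = c)).card) (mem_univ (cmap e'))
      have hpos : 1 ≤ (univ.filter (fun e'' : E => cmap e'' = cmap e')).card :=
        Finset.card_pos.mpr ⟨e', hmem⟩
      rw [hcard1]
      push_cast [hpos]
      have : ((univ.filter (fun e'' : E => cmap e'' = cmap e')).card : ℝ) ≤ d := by
        exact_mod_cast hle
      linarith
    calc 1 - ∏ i ∈ s, (1 - x t i) ≤ ∑ i ∈ s, x t i := h1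
      _ ≤ s.card • xbar t := h2
      _ = (s.card : ℝ) * xbar t := nsmul_eq_mul _ _
      _ ≤ ((d : ℝ) - 1) * xbar t := by apply mul_le_mul_of_nonneg_right hcard hxbar0
  have hy0 : ∀ e', 0 ≤ y (t + 1) e' := by
    intro e'
    rw [hy]
    have := (aux_prod_one_sub_mem (univ.filter (fun e'' => e'' ≠ e' ∧ cmap e'' = cmap e'))
      (x t) (fun i _ => (hx01 t i).1) (fun i _ => (hx01 t i).2)).2
    linarith
  rw [hx]
  apply mul_le_mul_of_nonneg_left _ hε0
  set sv := univ.filter (fun e' => e' ≠ e ∧ vmap e' = vmap e) with hsv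
  have hsveq : sv = (univ.filter (fun e' : E => vmap e' = vmap e)).erase e := by
    ext a; simp [hsv, Finset.mem_erase, and_comm]
  have hmemv : e ∈ univ.filter (fun e' : E => vmap e' = vmap e) := by simp
  have hcardv : sv.card = (univ.filter (fun e' : E => vmap e' = vmap e)).card - 1 := by
    rw [hsveq, Finset.card_erase_of_mem hmemv]
  calc ∏ e' ∈ sv, y (t + 1) e'
      ≤ ∏ _e' ∈ sv, (((d : ℝ) - 1) * xbar t) :=
        Finset.prod_le_prod (fun i _ => hy0 i) (fun i _ => hybound i)
    _ = (((d : ℝ) - 1) * xbar t) ^ sv.card := Finset.prod_const _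
    _ = _ := by rw [hcardv]
end

section
/- In a simple graph G, every closed non-backtracking walk of positive length has length at least the girth of G. Here a walk w_0, w_1, …, w_L (with w_0 = w_L, L ≥ 1) is non-backtracking if w_{i+1} ≠ w_{i−1} for all 1 ≤ i ≤ L−1 and also w_1 ≠ w_{L−1}. -/
/-!
Among all pairs `i < j ≤ L` with `w i = w j` (the pair `(0, L)` is one), take one with `j - i`
minimal. Then `w (i + 1), …, w j` are distinct, so `w i, …, w j` is a cycle as soon as
`j - i ≥ 3`; the gap is not `1` because `G` has no loops, and not `2` because the walk does not
backtrack at `i + 1`. Hence `girth G ≤ j - i ≤ L`.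
-/

namespace SimpleGraph

variable {α : Type*} (G : SimpleGraph α)

lemma exists_walk_getVert_eq (w : ℕ → α) (n : ℕ) (hadj : ∀ i < n, G.Adj (w i) (w (i + 1))) :
    ∃ p : G.Walk (w 0) (w n), p.length = n ∧ ∀ i ≤ n, p.getVert i = w i := by
  induction n generalizing w with
  | zero => exact ⟨.nil, rfl, fun i hi => by simp [Nat.le_zero.mp hi]⟩
  | succ n ih =>
    obtain ⟨p, hlen, hget⟩ := ih (fun i => w (i + 1)) fun i hi => hadj (i + 1) (by omega)
    refine ⟨.cons (hadj 0 (by omega)) p, by simp [hlen], fun i hi => ?_⟩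
    cases i with
    | zero => rfl
    | succ i => simpa using hget i (by omega)

lemma girth_le_of_injOn_Ioc {w : ℕ → α} {m : ℕ} (hm : 3 ≤ m)
    (hadj : ∀ i < m, G.Adj (w i) (w (i + 1))) (hclosed : w m = w 0)
    (hinj : Set.InjOn w (Set.Ioc 0 m)) : G.girth ≤ m := by
  obtain ⟨p, hlen, hget⟩ := G.exists_walk_getVert_eq w m hadj
  let c : G.Walk (w 0) (w 0) := p.copy rfl hclosed
  have hc : c.IsCycle := by
    rw [Walk.isCycle_iff_isPath_tail_and_le_length, ← Walk.IsPath.getVert_injOn_iff]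
    refine ⟨fun a ha b hb hab => ?_, by simpa [c, hlen] using hm⟩
    simp only [c, Set.mem_ofPred_eq, Walk.length_tail, Walk.length_copy, hlen] at ha hb
    simp only [c, Walk.getVert_tail, Walk.getVert_copy, hget _ (by omega : a + 1 ≤ m),
      hget _ (by omega : b + 1 ≤ m)] at hab
    exact Nat.succ_injective (hinj ⟨by omega, by omega⟩ ⟨by omega, by omega⟩ hab)
  simpa [c, hlen] using G.girth_le_length hc

end SimpleGraph

lemma exists_closed_segment_injOn {α : Type*} {w : ℕ → α} {L : ℕ} (hL : 0 < L)
    (hclosed : w L = w 0) :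
    ∃ i d, 0 < d ∧ i + d ≤ L ∧ w (i + d) = w i ∧
      Set.InjOn (fun k => w (i + k)) (Set.Ioc 0 d) := by
  classical
  have hex : ∃ d, 0 < d ∧ ∃ i, i + d ≤ L ∧ w (i + d) = w i := ⟨L, hL, 0, by simpa using hclosed⟩
  obtain ⟨hd, i, hiL, heq⟩ := Nat.find_spec hex
  refine ⟨i, Nat.find hex, hd, hiL, heq, fun a ha b hb hab => ?_⟩
  simp only [Set.mem_Ioc] at ha hb
  by_contra hne
  rcases Nat.lt_or_gt_of_ne hne with h | h
  · exact Nat.find_min hex (m := b - a) (by omega)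
      ⟨by omega, i + a, by omega, by rw [show i + a + (b - a) = i + b by omega]; exact hab.symm⟩
  · exact Nat.find_min hex (m := a - b) (by omega)
      ⟨by omega, i + b, by omega, by rw [show i + b + (a - b) = i + a by omega]; exact hab⟩

theorem girth_le_length_of_closed_nonbacktracking_walk_general
    {α : Type*} (G : SimpleGraph α)
    (L : ℕ) (hL : 1 ≤ L) (w : ℕ → α)
    (hclosed : w L = w 0)
    (hadj : ∀ i : ℕ, i < L → G.Adj (w i) (w (i + 1)))
    (hnb : ∀ i : ℕ, 1 ≤ i → i ≤ L - 1 → w (i + 1) ≠ w (i - 1)) :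
    G.girth ≤ (L : ℕ∞) := by
  obtain ⟨i, d, hd, hdL, hcyc, hinj⟩ := exists_closed_segment_injOn hL hclosed
  have hd1 : d ≠ 1 := by
    rintro rfl
    exact (hadj i (by omega)).ne hcyc.symm
  have hd2 : d ≠ 2 := by
    rintro rfl
    exact hnb (i + 1) (by omega) (by omega) hcyc
  have hgirth : G.girth ≤ d :=
    G.girth_le_of_injOn_Ioc (w := fun k => w (i + k)) (by omega)
      (fun k hk => hadj (i + k) (by omega)) hcyc hinj
  exact_mod_cast hgirth.trans (by omega : d ≤ L)

/-- In a simple graph `G`, every closed non-backtracking walk of positive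
length has length at least the girth of `G`.  A closed walk `w 0, w 1, …, w L` (with
`w L = w 0`, `L ≥ 1`, consecutive vertices adjacent) is non-backtracking if
`w (i+1) ≠ w (i-1)` for all `1 ≤ i ≤ L - 1` and also `w 1 ≠ w (L-1)`. -/
theorem girth_le_length_of_closed_nonbacktracking_walk
    {α : Type*} (G : SimpleGraph α)
    (L : ℕ) (hL : 1 ≤ L) (w : ℕ → α)
    (hclosed : w L = w 0)
    (hadj : ∀ i : ℕ, i < L → G.Adj (w i) (w (i + 1)))
    (hnb : ∀ i : ℕ, 1 ≤ i → i ≤ L - 1 → w (i + 1) ≠ w (i - 1))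
    (hnb' : w 1 ≠ w (L - 1)) :
    G.girth ≤ (L : ℕ∞) :=
  girth_le_length_of_closed_nonbacktracking_walk_general G L hL w hclosed hadj hnb
end

section
/- Let ε ∈ [0,1], let x_t, y_t be the density-evolution sequences of a protograph, let x̄_t = max_{e ∈ E} x_t(e), and let d ≥ 2 be the maximum check-node degree. Suppose every variable node has degree at least 2, every check node is adjacent to at most one variable node of degree 2, and x̄_t → 0. Then for every k > 0 there exists a constant C > 0 and N such that for all n ≥ N, taking t(n) = 2⌈log n⌉ iterations gives x̄_{t(n)} ≤ C / n^k; i.e., below threshold, the bit-erasure probability after Θ(log n) iterations decays faster than any inverse polynomial in n. -/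
open Finset

private lemma aux_one_sub_sum_le_prod_one_sub {ι : Type*} (s : Finset ι) (f : ι → ℝ)
    (h0 : ∀ i ∈ s, 0 ≤ f i) (h1 : ∀ i ∈ s, f i ≤ 1) :
    1 - ∑ i ∈ s, f i ≤ ∏ i ∈ s, (1 - f i) := by
  classical
  induction s using Finset.cons_induction with
  | empty => simp
  | cons a s ha ih =>
    rw [Finset.sum_cons, Finset.prod_cons]
    have h0a : 0 ≤ f a := h0 a (Finset.mem_cons_self a s)
    have h1a : f a ≤ 1 := h1 a (Finset.mem_cons_self a s)
    have ihs : 1 - ∑ i ∈ s, f i ≤ ∏ i ∈ s, (1 - f i) :=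
      ih (fun i hi => h0 i (Finset.mem_cons_of_mem hi))
        (fun i hi => h1 i (Finset.mem_cons_of_mem hi))
    have hS0 : 0 ≤ ∑ i ∈ s, f i := Finset.sum_nonneg (fun i hi => h0 i (Finset.mem_cons_of_mem hi))
    have hkey : (1 - f a) * (1 - ∑ i ∈ s, f i) ≤ (1 - f a) * ∏ i ∈ s, (1 - f i) :=
      mul_le_mul_of_nonneg_left ihs (by linarith)
    nlinarith [hkey]

/-- Let `ε ∈ [0,1]`, let `x`, `y` be the density-evolution sequences of a
protograph, let `x̄ t = max_e x t e`, and let `d ≥ 2` be the maximum check-node degree.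
Suppose every variable node has degree at least 2, every check node is adjacent to at most
one degree-2 variable node, and `x̄ t → 0`.  Then for every `k > 0` there exist `C > 0`
and `N` such that for all `n ≥ N`, taking `t n = 2⌈log n⌉` iterations gives
`x̄ (t n) ≤ C / n ^ k`: below threshold, the bit-erasure probability after `Θ(log n)`
iterations decays faster than any inverse polynomial in `n`. -/
theorem protograph_density_evolution_inverse_polynomial_decay
    {E V C : Type*} [Fintype E] [DecidableEq E] [Nonempty E]
    [Fintype V] [DecidableEq V] [Fintype C] [DecidableEq C]
    (vmap : E → V) (cmap : E → C)
    (ε : ℝ) (hε : ε ∈ Set.Icc (0 : ℝ) 1)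
    (x y : ℕ → E → ℝ)
    (hx0 : ∀ e : E, x 0 e = ε)
    (hy : ∀ (t : ℕ) (e : E), y (t + 1) e =
      1 - ∏ e' ∈ univ.filter (fun e' => e' ≠ e ∧ cmap e' = cmap e), (1 - x t e'))
    (hx : ∀ (t : ℕ) (e : E), x (t + 1) e =
      ε * ∏ e' ∈ univ.filter (fun e' => e' ≠ e ∧ vmap e' = vmap e), y (t + 1) e')
    (d : ℕ)
    (hd : d = univ.sup (fun c : C => (univ.filter (fun e : E => cmap e = c)).card))
    (hd2 : 2 ≤ d)
    (xbar : ℕ → ℝ)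
    (hxbar : ∀ t : ℕ, xbar t = univ.sup' univ_nonempty (x t))
    (hvdeg : ∀ v : V, 2 ≤ (univ.filter (fun e : E => vmap e = v)).card)
    (hchk : ∀ c : C,
      (univ.filter (fun e : E => cmap e = c ∧
        (univ.filter (fun e' : E => vmap e' = vmap e)).card = 2)).card ≤ 1)
    (hthr : Filter.Tendsto xbar Filter.atTop (nhds 0)) :
    ∀ k : ℝ, 0 < k → ∃ C₀ : ℝ, 0 < C₀ ∧ ∃ N : ℕ, ∀ n : ℕ, N ≤ n →
      xbar (2 * ⌈Real.log n⌉₊) ≤ C₀ / (n : ℝ) ^ k := by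
  obtain ⟨hε0, hε1⟩ := hε
  -- basic bounds 0 ≤ x ≤ 1
  have hx01 : ∀ t (e : E), 0 ≤ x t e ∧ x t e ≤ 1 := by
    intro t
    induction t with
    | zero => intro e; rw [hx0]; exact ⟨hε0, hε1⟩
    | succ t ih =>
      have hy01 : ∀ e : E, 0 ≤ y (t + 1) e ∧ y (t + 1) e ≤ 1 := by
        intro e
        rw [hy]
        have hp0 : (0 : ℝ) ≤ ∏ e' ∈ univ.filter (fun e' => e' ≠ e ∧ cmap e' = cmap e),
            (1 - x t e') := Finset.prod_nonneg (fun i _ => by linarith [(ih i).2])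
        have hp1 : ∏ e' ∈ univ.filter (fun e' => e' ≠ e ∧ cmap e' = cmap e), (1 - x t e') ≤ 1 :=
          Finset.prod_le_one (fun i _ => by linarith [(ih i).2]) (fun i _ => by
            linarith [(ih i).1])
        constructor <;> linarith
      intro e
      rw [hx]
      have hp0 : (0 : ℝ) ≤ ∏ e' ∈ univ.filter (fun e' => e' ≠ e ∧ vmap e' = vmap e),
          y (t + 1) e' := Finset.prod_nonneg (fun i _ => (hy01 i).1)
      have hp1 : ∏ e' ∈ univ.filter (fun e' => e' ≠ e ∧ vmap e' = vmap e), y (t + 1) e' ≤ 1 :=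
        Finset.prod_le_one (fun i _ => (hy01 i).1) (fun i _ => (hy01 i).2)
      constructor
      · exact mul_nonneg hε0 hp0
      · calc ε * ∏ e' ∈ univ.filter (fun e' => e' ≠ e ∧ vmap e' = vmap e), y (t + 1) e'
            ≤ 1 * 1 := mul_le_mul hε1 hp1 hp0 zero_le_one
        _ = 1 := by ring
  have hy01 : ∀ t (e : E), 0 ≤ y (t + 1) e ∧ y (t + 1) e ≤ 1 := by
    intro t e
    rw [hy]
    have hp0 : (0 : ℝ) ≤ ∏ e' ∈ univ.filter (fun e' => e' ≠ e ∧ cmap e' = cmap e),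
        (1 - x t e') := Finset.prod_nonneg (fun i _ => by linarith [(hx01 t i).2])
    have hp1 : ∏ e' ∈ univ.filter (fun e' => e' ≠ e ∧ cmap e' = cmap e), (1 - x t e') ≤ 1 :=
      Finset.prod_le_one (fun i _ => by linarith [(hx01 t i).2]) (fun i _ => by
        linarith [(hx01 t i).1])
    constructor <;> linarith
  have hxble : ∀ t (e : E), x t e ≤ xbar t := by
    intro t e
    rw [hxbar]
    exact Finset.le_sup' (x t) (mem_univ e)
  have hxbar0 : ∀ t, 0 ≤ xbar t := by
    intro t
    obtain ⟨e⟩ := ‹Nonempty E›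
    exact le_trans (hx01 t e).1 (hxble t e)
  -- cardinality of check neighborhoods
  have hcEc : ∀ e : E, (univ.filter (fun e' => e' ≠ e ∧ cmap e' = cmap e)).card + 1 ≤ d := by
    intro e
    have hsub : univ.filter (fun e' => e' ≠ e ∧ cmap e' = cmap e)
        = (univ.filter (fun e' : E => cmap e' = cmap e)).erase e := by
      ext e'; simp [Finset.mem_erase, and_comm]
    have hmem : e ∈ univ.filter (fun e' : E => cmap e' = cmap e) := by simp
    have hcard : (univ.filter (fun e' : E => cmap e' = cmap e)).card ≤ d := by
      rw [hd]
      exact Finset.le_sup (f := fun c : C => (univ.filter (fun e : E => cmap e = c)).card)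
        (mem_univ (cmap e))
    rw [hsub, Finset.card_erase_of_mem hmem]
    have hpos : 1 ≤ (univ.filter (fun e' : E => cmap e' = cmap e)).card :=
      Finset.card_pos.mpr ⟨e, hmem⟩
    omega
  -- cardinality of variable neighborhoods
  have hcEv : ∀ e : E, (univ.filter (fun e' => e' ≠ e ∧ vmap e' = vmap e)).card + 1
      = (univ.filter (fun e' : E => vmap e' = vmap e)).card := by
    intro e
    have hsub : univ.filter (fun e' => e' ≠ e ∧ vmap e' = vmap e)
        = (univ.filter (fun e' : E => vmap e' = vmap e)).erase e := by
      ext e'; simp [Finset.mem_erase, and_comm]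
    have hmem : e ∈ univ.filter (fun e' : E => vmap e' = vmap e) := by simp
    have hpos : 1 ≤ (univ.filter (fun e' : E => vmap e' = vmap e)).card :=
      Finset.card_pos.mpr ⟨e, hmem⟩
    rw [hsub, Finset.card_erase_of_mem hmem]
    omega
  set D : ℝ := (d : ℝ) - 1 with hDdef
  have hD1 : (1 : ℝ) ≤ D := by
    have : (2 : ℝ) ≤ (d : ℝ) := by exact_mod_cast hd2
    simp only [hDdef]; linarith
  have hD0 : (0 : ℝ) ≤ D := le_trans zero_le_one hD1
  -- linear bound on y
  have hylin : ∀ t (e : E), y (t + 1) e ≤ D * xbar t := by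
    intro t e
    rw [hy]
    have h1 : 1 - ∑ e' ∈ univ.filter (fun e' => e' ≠ e ∧ cmap e' = cmap e), x t e'
        ≤ ∏ e' ∈ univ.filter (fun e' => e' ≠ e ∧ cmap e' = cmap e), (1 - x t e') :=
      aux_one_sub_sum_le_prod_one_sub _ _ (fun i _ => (hx01 t i).1) (fun i _ => (hx01 t i).2)
    have h2 : ∑ e' ∈ univ.filter (fun e' => e' ≠ e ∧ cmap e' = cmap e), x t e'
        ≤ ((univ.filter (fun e' => e' ≠ e ∧ cmap e' = cmap e)).card : ℝ) * xbar t := by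
      have := Finset.sum_le_card_nsmul (univ.filter (fun e' => e' ≠ e ∧ cmap e' = cmap e))
        (x t) (xbar t) (fun i _ => hxble t i)
      simpa [nsmul_eq_mul] using this
    have h3 : ((univ.filter (fun e' => e' ≠ e ∧ cmap e' = cmap e)).card : ℝ) ≤ D := by
      have := hcEc e
      have : ((univ.filter (fun e' => e' ≠ e ∧ cmap e' = cmap e)).card + 1 : ℝ) ≤ (d : ℝ) := by
        exact_mod_cast this
      simp only [hDdef]; linarith
    have h4 : ((univ.filter (fun e' => e' ≠ e ∧ cmap e' = cmap e)).card : ℝ) * xbar t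
        ≤ D * xbar t := mul_le_mul_of_nonneg_right h3 (hxbar0 t)
    linarith
  -- quadratic bound for edges at variables of degree at least 3
  have hq : ∀ t (e : E), 2 ≤ (univ.filter (fun e' => e' ≠ e ∧ vmap e' = vmap e)).card →
      x (t + 1) e ≤ (D * xbar t) ^ 2 := by
    intro t e hcard
    rw [hx]
    set a : ℝ := min 1 (D * xbar t) with hadef
    have ha0 : 0 ≤ a := le_min zero_le_one (mul_nonneg hD0 (hxbar0 t))
    have ha1 : a ≤ 1 := min_le_left _ _
    have hprodle : ∏ e' ∈ univ.filter (fun e' => e' ≠ e ∧ vmap e' = vmap e), y (t + 1) e'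
        ≤ a ^ (univ.filter (fun e' => e' ≠ e ∧ vmap e' = vmap e)).card := by
      rw [← Finset.prod_const]
      exact Finset.prod_le_prod (fun i _ => (hy01 t i).1)
        (fun i _ => le_min (hy01 t i).2 (hylin t i))
    have hpow : a ^ (univ.filter (fun e' => e' ≠ e ∧ vmap e' = vmap e)).card ≤ a ^ 2 :=
      pow_le_pow_of_le_one ha0 ha1 hcard
    have ha2 : a ^ 2 ≤ (D * xbar t) ^ 2 := pow_le_pow_left₀ ha0 (min_le_right _ _) 2
    have hprod0 : (0 : ℝ) ≤ ∏ e' ∈ univ.filter (fun e' => e' ≠ e ∧ vmap e' = vmap e),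
        y (t + 1) e' := Finset.prod_nonneg (fun i _ => (hy01 t i).1)
    calc ε * ∏ e' ∈ univ.filter (fun e' => e' ≠ e ∧ vmap e' = vmap e), y (t + 1) e'
        ≤ 1 * ∏ e' ∈ univ.filter (fun e' => e' ≠ e ∧ vmap e' = vmap e), y (t + 1) e' :=
          mul_le_mul_of_nonneg_right hε1 hprod0
      _ = ∏ e' ∈ univ.filter (fun e' => e' ≠ e ∧ vmap e' = vmap e), y (t + 1) e' := one_mul _
      _ ≤ (D * xbar t) ^ 2 := le_trans hprodle (le_trans hpow ha2)
  -- structure: edges at the check of the partner of a degree-2 edge all have degree ≥ 3 vars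
  have hdeg3 : ∀ e e' e'' : E, (univ.filter (fun e₀ : E => vmap e₀ = vmap e)).card = 2 →
      vmap e' = vmap e → cmap e'' = cmap e' → e'' ≠ e' →
      3 ≤ (univ.filter (fun e₀ : E => vmap e₀ = vmap e'')).card := by
    intro e e' e'' hdeg2 hv hc hne
    by_contra hlt
    have h2'' : (univ.filter (fun e₀ : E => vmap e₀ = vmap e'')).card = 2 := by
      have := hvdeg (vmap e'')
      omega
    have h2' : (univ.filter (fun e₀ : E => vmap e₀ = vmap e')).card = 2 := by
      rw [hv]; exact hdeg2
    have hmem' : e' ∈ univ.filter (fun e₀ : E => cmap e₀ = cmap e' ∧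
        (univ.filter (fun e₁ : E => vmap e₁ = vmap e₀)).card = 2) := by
      simp [h2']
    have hmem'' : e'' ∈ univ.filter (fun e₀ : E => cmap e₀ = cmap e' ∧
        (univ.filter (fun e₁ : E => vmap e₁ = vmap e₀)).card = 2) := by
      simp [hc, h2'']
    have hgt : 1 < (univ.filter (fun e₀ : E => cmap e₀ = cmap e' ∧
        (univ.filter (fun e₁ : E => vmap e₁ = vmap e₀)).card = 2)).card :=
      Finset.one_lt_card.mpr ⟨e'', hmem'', e', hmem', hne⟩
    have := hchk (cmap e')
    omega
  -- bound for degree-2 edges over two steps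
  have hlin2 : ∀ t (e : E), (univ.filter (fun e₀ : E => vmap e₀ = vmap e)).card = 2 →
      x (t + 2) e ≤ D * (D * xbar t) ^ 2 := by
    intro t e hdeg2
    have hcard1 : (univ.filter (fun e' => e' ≠ e ∧ vmap e' = vmap e)).card = 1 := by
      have := hcEv e
      omega
    obtain ⟨e', he'⟩ := Finset.card_eq_one.mp hcard1
    have he'mem : e' ∈ univ.filter (fun e'' => e'' ≠ e ∧ vmap e'' = vmap e) := by
      rw [he']; exact Finset.mem_singleton_self e'
    have hv' : vmap e' = vmap e := (Finset.mem_filter.mp he'mem).2.2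
    have hx2 : x (t + 2) e = ε * y (t + 2) e' := by
      have := hx (t + 1) e
      rw [he', Finset.prod_singleton] at this
      exact this
    -- bound y (t+2) e'
    have hyb : y (t + 2) e' ≤ D * (D * xbar t) ^ 2 := by
      rw [hy (t + 1) e']
      have h1 : 1 - ∑ e'' ∈ univ.filter (fun e'' => e'' ≠ e' ∧ cmap e'' = cmap e'), x (t + 1) e''
          ≤ ∏ e'' ∈ univ.filter (fun e'' => e'' ≠ e' ∧ cmap e'' = cmap e'), (1 - x (t + 1) e'') :=
        aux_one_sub_sum_le_prod_one_sub _ _ (fun i _ => (hx01 (t + 1) i).1)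
          (fun i _ => (hx01 (t + 1) i).2)
      have hterm : ∀ e'' ∈ univ.filter (fun e'' => e'' ≠ e' ∧ cmap e'' = cmap e'),
          x (t + 1) e'' ≤ (D * xbar t) ^ 2 := by
        intro e'' hmem
        obtain ⟨hne, hc⟩ := (Finset.mem_filter.mp hmem).2
        have h3 : 3 ≤ (univ.filter (fun e₀ : E => vmap e₀ = vmap e'')).card :=
          hdeg3 e e' e'' hdeg2 hv' hc hne
        have h2 : 2 ≤ (univ.filter (fun e₀ => e₀ ≠ e'' ∧ vmap e₀ = vmap e'')).card := by
          have := hcEv e''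
          omega
        exact hq t e'' h2
      have h2 : ∑ e'' ∈ univ.filter (fun e'' => e'' ≠ e' ∧ cmap e'' = cmap e'), x (t + 1) e''
          ≤ ((univ.filter (fun e'' => e'' ≠ e' ∧ cmap e'' = cmap e')).card : ℝ)
            * (D * xbar t) ^ 2 := by
        have := Finset.sum_le_card_nsmul (univ.filter (fun e'' => e'' ≠ e' ∧ cmap e'' = cmap e'))
          (x (t + 1)) ((D * xbar t) ^ 2) hterm
        simpa [nsmul_eq_mul] using this
      have h3 : ((univ.filter (fun e'' => e'' ≠ e' ∧ cmap e'' = cmap e')).card : ℝ) ≤ D := by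
        have := hcEc e'
        have : ((univ.filter (fun e'' => e'' ≠ e' ∧ cmap e'' = cmap e')).card + 1 : ℝ)
            ≤ (d : ℝ) := by exact_mod_cast this
        simp only [hDdef]; linarith
      have h4 : ((univ.filter (fun e'' => e'' ≠ e' ∧ cmap e'' = cmap e')).card : ℝ)
          * (D * xbar t) ^ 2 ≤ D * (D * xbar t) ^ 2 :=
        mul_le_mul_of_nonneg_right h3 (sq_nonneg _)
      linarith
    rw [hx2]
    have hy0 : 0 ≤ y (t + 2) e' := (hy01 (t + 1) e').1
    calc ε * y (t + 2) e' ≤ 1 * y (t + 2) e' := mul_le_mul_of_nonneg_right hε1 hy0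
      _ = y (t + 2) e' := one_mul _
      _ ≤ D * (D * xbar t) ^ 2 := hyb
  -- the key two-step recursion
  have key : ∀ t, xbar (t + 2) ≤ D ^ 3 * max (xbar t) (xbar (t + 1)) ^ 2 := by
    intro t
    rw [hxbar (t + 2)]
    apply Finset.sup'_le
    intro e _
    have hm0 : 0 ≤ max (xbar t) (xbar (t + 1)) := le_trans (hxbar0 t) (le_max_left _ _)
    by_cases hdeg2 : (univ.filter (fun e₀ : E => vmap e₀ = vmap e)).card = 2
    · have := hlin2 t e hdeg2
      have hle : xbar t ≤ max (xbar t) (xbar (t + 1)) := le_max_left _ _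
      have hsq : (D * xbar t) ^ 2 ≤ (D * max (xbar t) (xbar (t + 1))) ^ 2 :=
        pow_le_pow_left₀ (mul_nonneg hD0 (hxbar0 t)) (mul_le_mul_of_nonneg_left hle hD0) 2
      calc x (t + 2) e ≤ D * (D * xbar t) ^ 2 := this
        _ ≤ D * (D * max (xbar t) (xbar (t + 1))) ^ 2 := mul_le_mul_of_nonneg_left hsq hD0
        _ = D ^ 3 * max (xbar t) (xbar (t + 1)) ^ 2 := by ring
    · have h3 : 3 ≤ (univ.filter (fun e₀ : E => vmap e₀ = vmap e)).card := by
        have := hvdeg (vmap e)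
        omega
      have h2 : 2 ≤ (univ.filter (fun e₀ => e₀ ≠ e ∧ vmap e₀ = vmap e)).card := by
        have := hcEv e
        omega
      have := hq (t + 1) e h2
      have hle : xbar (t + 1) ≤ max (xbar t) (xbar (t + 1)) := le_max_right _ _
      have hsq : (D * xbar (t + 1)) ^ 2 ≤ (D * max (xbar t) (xbar (t + 1))) ^ 2 :=
        pow_le_pow_left₀ (mul_nonneg hD0 (hxbar0 (t + 1)))
          (mul_le_mul_of_nonneg_left hle hD0) 2
      calc x (t + 2) e ≤ (D * xbar (t + 1)) ^ 2 := this
        _ ≤ (D * max (xbar t) (xbar (t + 1))) ^ 2 := hsq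
        _ = D ^ 2 * max (xbar t) (xbar (t + 1)) ^ 2 := by ring
        _ ≤ D ^ 3 * max (xbar t) (xbar (t + 1)) ^ 2 := by
            have : D ^ 2 ≤ D ^ 3 := pow_le_pow_right₀ hD1 (by norm_num)
            exact mul_le_mul_of_nonneg_right this (sq_nonneg _)
  set K : ℝ := D ^ 3 with hKdef
  have hK1 : (1 : ℝ) ≤ K := by rw [hKdef]; exact one_le_pow₀ hD1
  have hK0 : (0 : ℝ) < K := lt_of_lt_of_le zero_lt_one hK1
  -- find T₁ beyond which xbar is small
  have hsmall : ∀ᶠ s in Filter.atTop, xbar s < 1 / (2 * K) :=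
    hthr.eventually_lt_const (by positivity)
  obtain ⟨T₁, hT₁⟩ := Filter.eventually_atTop.mp hsmall
  -- doubly exponential decay by pair induction
  have ind : ∀ s : ℕ,
      K * max (xbar (2 * T₁ + 2 * s)) (xbar (2 * T₁ + 2 * s + 1)) ≤ (1 / 2 : ℝ) ^ (2 ^ s) ∧
      K * max (xbar (2 * T₁ + 2 * s + 1)) (xbar (2 * T₁ + 2 * s + 2)) ≤ (1 / 2 : ℝ) ^ (2 ^ s) := by
    intro s
    induction s with
    | zero =>
      have hb : ∀ u : ℕ, T₁ ≤ u → K * xbar u ≤ 1 / 2 := by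
        intro u hu
        have := le_of_lt (hT₁ u hu)
        calc K * xbar u ≤ K * (1 / (2 * K)) := mul_le_mul_of_nonneg_left this (le_of_lt hK0)
          _ = 1 / 2 := by field_simp
      constructor
      · simp only [pow_zero, pow_one, Nat.mul_zero, Nat.add_zero]
        rcases max_cases (xbar (2 * T₁)) (xbar (2 * T₁ + 1)) with ⟨heq, _⟩ | ⟨heq, _⟩
        · rw [heq]; exact hb _ (by omega)
        · rw [heq]; exact hb _ (by omega)
      · simp only [pow_zero, pow_one, Nat.mul_zero, Nat.add_zero]
        rcases max_cases (xbar (2 * T₁ + 1)) (xbar (2 * T₁ + 2)) with ⟨heq, _⟩ | ⟨heq, _⟩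
        · rw [heq]; exact hb _ (by omega)
        · rw [heq]; exact hb _ (by omega)
    | succ s ih =>
      obtain ⟨h1, h2⟩ := ih
      have hhalfpow : (0 : ℝ) < (1 / 2 : ℝ) ^ (2 ^ s) := by positivity
      have hsqr : ∀ (a : ℝ) (b : ℕ), 0 ≤ a → xbar b ≤ K * a ^ 2 → K * a ≤ (1 / 2 : ℝ) ^ (2 ^ s) →
          K * xbar b ≤ (1 / 2 : ℝ) ^ (2 ^ (s + 1)) := by
        intro a b ha hxb hka
        have : K * xbar b ≤ K * (K * a ^ 2) := mul_le_mul_of_nonneg_left hxb (le_of_lt hK0)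
        have heq : K * (K * a ^ 2) = (K * a) ^ 2 := by ring
        have h2' : (K * a) ^ 2 ≤ ((1 / 2 : ℝ) ^ (2 ^ s)) ^ 2 :=
          pow_le_pow_left₀ (mul_nonneg (le_of_lt hK0) ha) hka 2
        have h3' : ((1 / 2 : ℝ) ^ (2 ^ s)) ^ 2 = (1 / 2 : ℝ) ^ (2 ^ (s + 1)) := by
          rw [← pow_mul, pow_succ]
        linarith [this, heq ▸ this]
      have hm1 : 0 ≤ max (xbar (2 * T₁ + 2 * s)) (xbar (2 * T₁ + 2 * s + 1)) :=
        le_trans (hxbar0 _) (le_max_left _ _)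
      have hm2 : 0 ≤ max (xbar (2 * T₁ + 2 * s + 1)) (xbar (2 * T₁ + 2 * s + 2)) :=
        le_trans (hxbar0 _) (le_max_left _ _)
      -- bounds on the three new entries
      have hz2 : K * xbar (2 * T₁ + 2 * s + 2) ≤ (1 / 2 : ℝ) ^ (2 ^ (s + 1)) := by
        have hk := key (2 * T₁ + 2 * s)
        exact hsqr _ _ hm1 hk h1
      have hz3 : K * xbar (2 * T₁ + 2 * s + 3) ≤ (1 / 2 : ℝ) ^ (2 ^ (s + 1)) := by
        have hk := key (2 * T₁ + 2 * s + 1)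
        have hk' : xbar (2 * T₁ + 2 * s + 3) ≤
            K * max (xbar (2 * T₁ + 2 * s + 1)) (xbar (2 * T₁ + 2 * s + 2)) ^ 2 := by
          convert hk using 3 <;> omega
        exact hsqr _ _ hm2 hk' h2
      have hmono : (1 / 2 : ℝ) ^ (2 ^ (s + 1)) ≤ (1 / 2 : ℝ) ^ (2 ^ s) :=
        pow_le_pow_of_le_one (by norm_num) (by norm_num) (Nat.pow_le_pow_right (by norm_num)
          (Nat.le_succ s))
      have hm3 : 0 ≤ max (xbar (2 * T₁ + 2 * s + 2)) (xbar (2 * T₁ + 2 * s + 3)) :=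
        le_trans (hxbar0 _) (le_max_left _ _)
      have h23 : K * max (xbar (2 * T₁ + 2 * s + 2)) (xbar (2 * T₁ + 2 * s + 3))
          ≤ (1 / 2 : ℝ) ^ (2 ^ s) := by
        rcases max_cases (xbar (2 * T₁ + 2 * s + 2)) (xbar (2 * T₁ + 2 * s + 3)) with
          ⟨heq, _⟩ | ⟨heq, _⟩ <;> rw [heq] <;> [exact le_trans hz2 hmono;
            exact le_trans hz3 hmono]
      have hz4 : K * xbar (2 * T₁ + 2 * s + 4) ≤ (1 / 2 : ℝ) ^ (2 ^ (s + 1)) := by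
        have hk := key (2 * T₁ + 2 * s + 2)
        have hk' : xbar (2 * T₁ + 2 * s + 4) ≤
            K * max (xbar (2 * T₁ + 2 * s + 2)) (xbar (2 * T₁ + 2 * s + 3)) ^ 2 := by
          convert hk using 3 <;> omega
        exact hsqr _ _ hm3 hk' h23
      constructor
      · have e1 : 2 * T₁ + 2 * (s + 1) = 2 * T₁ + 2 * s + 2 := by ring
        have e2 : 2 * T₁ + 2 * (s + 1) + 1 = 2 * T₁ + 2 * s + 3 := by ring
        rw [e1]
        rcases max_cases (xbar (2 * T₁ + 2 * s + 2)) (xbar (2 * T₁ + 2 * s + 2 + 1)) with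
          ⟨heq, _⟩ | ⟨heq, _⟩ <;> rw [heq]
        · exact hz2
        · have : 2 * T₁ + 2 * s + 2 + 1 = 2 * T₁ + 2 * s + 3 := by ring
          rw [this]; exact hz3
      · have e1 : 2 * T₁ + 2 * (s + 1) + 1 = 2 * T₁ + 2 * s + 3 := by ring
        have e2 : 2 * T₁ + 2 * (s + 1) + 2 = 2 * T₁ + 2 * s + 4 := by ring
        rw [e1, e2]
        rcases max_cases (xbar (2 * T₁ + 2 * s + 3)) (xbar (2 * T₁ + 2 * s + 4)) with
          ⟨heq, _⟩ | ⟨heq, _⟩ <;> rw [heq]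
        · exact hz3
        · exact hz4
  have hfast : ∀ s : ℕ, xbar (2 * T₁ + 2 * s) ≤ (1 / 2 : ℝ) ^ (2 ^ s) := by
    intro s
    have h := (ind s).1
    have hle : xbar (2 * T₁ + 2 * s) ≤ K * max (xbar (2 * T₁ + 2 * s))
        (xbar (2 * T₁ + 2 * s + 1)) := by
      calc xbar (2 * T₁ + 2 * s) ≤ max (xbar (2 * T₁ + 2 * s)) (xbar (2 * T₁ + 2 * s + 1)) :=
            le_max_left _ _
        _ = 1 * max (xbar (2 * T₁ + 2 * s)) (xbar (2 * T₁ + 2 * s + 1)) := (one_mul _).symm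
        _ ≤ K * max (xbar (2 * T₁ + 2 * s)) (xbar (2 * T₁ + 2 * s + 1)) :=
            mul_le_mul_of_nonneg_right hK1 (le_trans (hxbar0 _) (le_max_left _ _))
    linarith
  -- final step: convert doubly exponential decay into inverse polynomial decay
  intro k hk
  refine ⟨1, one_pos, ?_⟩
  have hlog2 : (0 : ℝ) < Real.log 2 := Real.log_pos (by norm_num)
  -- eventually k * (T₁ + s) ≤ log 2 * 2 ^ s
  have htend : Filter.Tendsto (fun s : ℕ => ((T₁ : ℝ) + s) * (1 / 2 : ℝ) ^ s)
      Filter.atTop (nhds 0) := by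
    have h1 : Filter.Tendsto (fun s : ℕ => (T₁ : ℝ) * (1 / 2 : ℝ) ^ s)
        Filter.atTop (nhds 0) := by
      have := tendsto_pow_atTop_nhds_zero_of_lt_one (by norm_num : (0:ℝ) ≤ 1/2)
        (by norm_num : (1/2:ℝ) < 1)
      simpa using this.const_mul (T₁ : ℝ)
    have h2 : Filter.Tendsto (fun s : ℕ => (s : ℝ) * (1 / 2 : ℝ) ^ s)
        Filter.atTop (nhds 0) := by
      have habs : |(1/2 : ℝ)| < 1 := by rw [abs_lt]; constructor <;> norm_num
      have := tendsto_pow_const_mul_const_pow_of_abs_lt_one 1 habs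
      simpa using this
    have := h1.add h2
    simp only [add_zero] at this
    convert this using 2 with s
    ring
  have hev : ∀ᶠ s : ℕ in Filter.atTop,
      ((T₁ : ℝ) + s) * (1 / 2 : ℝ) ^ s < Real.log 2 / k :=
    htend.eventually_lt_const (by positivity)
  obtain ⟨S₀, hS₀⟩ := Filter.eventually_atTop.mp hev
  refine ⟨⌈Real.exp (T₁ + S₀)⌉₊, ?_⟩
  intro n hn
  have hnR : Real.exp (T₁ + S₀) ≤ (n : ℝ) := by
    have := Nat.ceil_le.mp (le_refl ⌈Real.exp (T₁ + S₀)⌉₊)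
    exact le_trans this (by exact_mod_cast hn)
  have hn0 : (0 : ℝ) < n := lt_of_lt_of_le (Real.exp_pos _) hnR
  have hlogn : (T₁ + S₀ : ℝ) ≤ Real.log n := by
    have := Real.log_le_log (Real.exp_pos _) hnR
    rwa [Real.log_exp] at this
  set m : ℕ := ⌈Real.log n⌉₊ with hmdef
  have hlogm : Real.log n ≤ (m : ℝ) := Nat.le_ceil _
  have hmge : T₁ + S₀ ≤ m := by
    have h1 : ((T₁ + S₀ : ℕ) : ℝ) ≤ Real.log n := by push_cast; linarith
    calc T₁ + S₀ = ⌈((T₁ + S₀ : ℕ) : ℝ)⌉₊ := (Nat.ceil_natCast _).symm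
      _ ≤ m := Nat.ceil_mono (by exact_mod_cast h1)
  set s : ℕ := m - T₁ with hsdef
  have hms : m = T₁ + s := by omega
  have hsge : S₀ ≤ s := by omega
  have h2m : 2 * m = 2 * T₁ + 2 * s := by omega
  have hbound : xbar (2 * m) ≤ (1 / 2 : ℝ) ^ (2 ^ s) := by
    rw [h2m]; exact hfast s
  -- now show (1/2)^(2^s) ≤ 1 / n^k
  have hexp : k * Real.log n ≤ (2 ^ s : ℕ) * Real.log 2 := by
    have hS := hS₀ s hsge
    have h1 : k * ((T₁ : ℝ) + s) ≤ Real.log 2 * 2 ^ s := by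
      have h2s : (0 : ℝ) < 2 ^ s := by positivity
      have hk0 : k ≠ 0 := ne_of_gt hk
      have hS' : ((T₁ : ℝ) + s) < Real.log 2 / k * 2 ^ s := by
        have := mul_lt_mul_of_pos_right hS h2s
        rwa [one_div, inv_pow, mul_assoc, inv_mul_cancel₀ (ne_of_gt h2s), mul_one] at this
      calc k * ((T₁ : ℝ) + s) ≤ k * (Real.log 2 / k * 2 ^ s) :=
            mul_le_mul_of_nonneg_left (le_of_lt hS') (le_of_lt hk)
        _ = Real.log 2 * 2 ^ s := by field_simp
    have h2 : Real.log n ≤ (T₁ : ℝ) + s := by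
      have : ((m : ℕ) : ℝ) = (T₁ : ℝ) + s := by rw [hms]; push_cast; ring
      linarith [hlogm, this ▸ hlogm]
    have h3 : k * Real.log n ≤ k * ((T₁ : ℝ) + s) :=
      mul_le_mul_of_nonneg_left h2 (le_of_lt hk)
    have h4 : ((2 ^ s : ℕ) : ℝ) = (2 : ℝ) ^ s := by push_cast; ring
    rw [h4]
    calc k * Real.log n ≤ Real.log 2 * 2 ^ s := le_trans h3 h1
      _ = (2 : ℝ) ^ s * Real.log 2 := by ring
  have hfin : (1 / 2 : ℝ) ^ (2 ^ s) ≤ 1 / (n : ℝ) ^ k := by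
    have hrpow : (n : ℝ) ^ k = Real.exp (k * Real.log n) := by
      rw [Real.rpow_def_of_pos hn0]; ring_nf
    have hlhs : (1 / 2 : ℝ) ^ (2 ^ s) = Real.exp (-(((2 ^ s : ℕ) : ℝ) * Real.log 2)) := by
      rw [← Real.log_pow]
      rw [Real.exp_neg]
      rw [Real.exp_log (by positivity : (0:ℝ) < (2:ℝ) ^ (2 ^ s : ℕ))]
      rw [div_pow, one_pow, one_div]
    rw [hlhs, hrpow, one_div, ← Real.exp_neg]
    exact Real.exp_le_exp.mpr (by linarith)
  calc xbar (2 * ⌈Real.log n⌉₊) = xbar (2 * m) := by rw [hmdef]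
    _ ≤ (1 / 2 : ℝ) ^ (2 ^ s) := hbound
    _ ≤ 1 / (n : ℝ) ^ k := hfin
end
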